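/- In a commutative group G, let d, C_k, C_{k-1} ∈ G, let t, p be natural numbers, and let b, a₀, b₀ be integers with a₀·t + b₀·p = 1. Suppose the old non-membership witness verifies: d ^ t · (C_k) ^ b = C_{k-1} (integer exponentiation for b). Let the updated commitment be C_n = (C_k) ^ p, and define the updated witness d' = d · (C_k) ^ (a₀·b). Then the updated witness verifies against the updated commitment: (d') ^ t · (C_n) ^ (b₀·b) = C_{k-1}. -/
import Mathlib

/-- Non-membership witness update correctness (UpNonMemWit): if
`d ^ t · C_k ^ b = C_{k-1}` and `a₀·t + b₀·p = 1`, then with `C_n = C_k ^ p` and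
`d' = d · C_k ^ (a₀·b)`, we have `d' ^ t · C_n ^ (b₀·b) = C_{k-1}`. -/
theorem nonmem_witness_update_verifies {G : Type*} [CommGroup G]
    (d Ck Ckm1 : G) (t p : ℕ) (b a₀ b₀ : ℤ)
    (hbezout : a₀ * t + b₀ * p = 1)
    (hver : d ^ t * Ck ^ b = Ckm1) :
    (d * Ck ^ (a₀ * b)) ^ t * ((Ck ^ p) : G) ^ (b₀ * b) = Ckm1 := by
  subst hver
  rw [mul_pow, ← zpow_natCast Ck p, ← zpow_mul, ← zpow_natCast (Ck ^ (a₀ * b)) t,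
    ← zpow_mul, mul_assoc, ← zpow_add]
  congr 1
  rw [show a₀ * b * ↑t + ↑p * (b₀ * b) = (a₀ * ↑t + b₀ * ↑p) * b by ring, hbezout, one_mul]
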